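/- Every codeword of the generalized affine Cartesian code C_k(𝒜, v) is the evaluation of a polynomial of total degree less than k whose degree in each variable X_i is less than n_i; that is, C_k(𝒜, v) = { ev_k(f) : f ∈ S_{<k} and deg_{X_i}(f) < n_i for all i ∈ {1, …, m} }. -/

import Mathlib

/-!
Reduce each polynomial modulo the vanishing polynomials `∏_{a ∈ A i} (X i - a)` by multivariate
division with respect to the graded lexicographic order. Each divisor has leading monomial
`X i ^ n_i`, so no monomial of the remainder is divisible by `X i ^ n_i`; the remainder agrees
with the dividend on `𝒜`, where the divisors vanish; and since `degLex` refines total degree,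
the remainder has no larger total degree than the dividend.
-/

open MvPolynomial

/-- The points of the Cartesian set `𝒜 = A 0 × ⋯ × A (m-1)`. -/
abbrev CartPts {K : Type*} {m : ℕ} (A : Fin m → Finset K) :=
  { x : Fin m → K // ∀ i, x i ∈ A i }

/-- The space `S_{<k}` of multivariate polynomials of total degree less than `k`. -/
def degLT (K : Type*) [Field K] (m k : ℕ) : Submodule K (MvPolynomial (Fin m) K) where
  carrier := {f | ∀ d ∈ f.support, (d.sum fun _ e => e) < k}
  zero_mem' := by simp
  add_mem' := fun {f g} hf hg d hd => by
    rcases Finset.mem_union.mp (MvPolynomial.support_add hd) with h | h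
    exacts [hf d h, hg d h]
  smul_mem' := fun c f hf d hd => hf d (MvPolynomial.support_smul hd)

/-- The evaluation map `ev : f ↦ (v_a · f(a))_{a ∈ 𝒜}`. -/
noncomputable def evalLM {K : Type*} [Field K] {m : ℕ} (A : Fin m → Finset K)
    (v : CartPts A → K) : MvPolynomial (Fin m) K →ₗ[K] (CartPts A → K) :=
  LinearMap.pi fun a => v a • (MvPolynomial.aeval (a.1 : Fin m → K)).toLinearMap

/-- The generalized affine Cartesian code `C_k(𝒜, v)`, the image of `S_{<k}` under `ev_k`. -/
noncomputable def cartCode {K : Type*} [Field K] {m : ℕ} (k : ℕ) (A : Fin m → Finset K)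
    (v : CartPts A → K) : Submodule K (CartPts A → K) :=
  Submodule.map (evalLM A v) (degLT K m k)

open Finset

namespace MonomialOrder

variable {R σ : Type*} [CommRing R] [Nontrivial R]

theorem degree_prod_X_sub_C (m : MonomialOrder σ) (S : Finset R) (i : σ) :
    m.degree (∏ r ∈ S, (X i - C r)) = Finsupp.single i #S := by
  rw [m.degree_prod_of_regular fun r _ => by
    rw [(m.monic_X_sub_C i r).leadingCoeff_eq_one]; exact isRegular_one]
  simp [m.degree_X_sub_C]

end MonomialOrder

namespace MvPolynomial

variable {R σ : Type*} [CommRing R] [Nontrivial R]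

theorem exists_degreeOf_lt_eval_eq [LinearOrder σ] [WellFoundedGT σ]
    (S : σ → Finset R) (hS : ∀ i, (S i).Nonempty) (f : MvPolynomial σ R) :
    ∃ r : MvPolynomial σ R, r.totalDegree ≤ f.totalDegree ∧ (∀ i, r.degreeOf i < #(S i)) ∧
      ∀ x : σ → R, (∀ i, x i ∈ S i) → eval x r = eval x f := by
  set b : σ → MvPolynomial σ R := fun i => ∏ s ∈ S i, (X i - C s)
  have hb_monic (i : σ) : MonomialOrder.degLex.Monic (b i) :=
    MonomialOrder.Monic.prod fun s _ => MonomialOrder.degLex.monic_X_sub_C i s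
  obtain ⟨g, r, hf, hg, hr⟩ := MonomialOrder.degLex.div (b := b)
    (fun i => (hb_monic i).leadingCoeff_eq_one ▸ isUnit_one) f
  have hq : Finsupp.linearCombination _ b g = ∑ i ∈ g.support, b i * g i := by
    simp only [Finsupp.linearCombination_apply, Finsupp.sum, smul_eq_mul, mul_comm]
  have hr_eq : r = f - ∑ i ∈ g.support, b i * g i := by rw [hf, hq]; ring
  refine ⟨r, ?_, fun i => ?_, fun x hx => ?_⟩
  · have hq_deg : (∑ i ∈ g.support, b i * g i).totalDegree ≤ f.totalDegree :=
      (totalDegree_finsetSum _ _).trans <|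
        Finset.sup_le fun i _ => degLex_totalDegree_monotone (hg i)
    rw [hr_eq]
    exact (totalDegree_sub _ _).trans (max_le le_rfl hq_deg)
  · rw [degreeOf_lt_iff (card_pos.2 (hS i))]
    intro c hc
    simpa [b, MonomialOrder.degree_prod_X_sub_C, Finsupp.single_le_iff] using hr c hc i
  · have hb : ∀ i, eval x (b i) = 0 := fun i => by
      simp only [b, map_prod, map_sub, eval_X, eval_C]
      exact prod_eq_zero (hx i) (sub_self _)
    simp [hr_eq, hb]

end MvPolynomial

theorem evalLM_apply {K : Type*} [Field K] {m : ℕ} (A : Fin m → Finset K) (v : CartPts A → K)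
    (f : MvPolynomial (Fin m) K) : evalLM A v f = fun a => v a * eval (a.1 : Fin m → K) f := by
  ext a
  simp [evalLM]

theorem mem_degLT_iff {K : Type*} [Field K] {m k : ℕ} (hk : 0 < k) (f : MvPolynomial (Fin m) K) :
    f ∈ degLT K m k ↔ f.totalDegree < k :=
  (Finset.sup_lt_iff hk).symm

theorem cartCode_eq_lowDeg_image_general {K : Type*} [Field K]
    {m : ℕ} (A : Fin m → Finset K) (hA : ∀ i, (A i).Nonempty)
    (v : CartPts A → K) (k : ℕ) (hk : 1 ≤ k) :
    (cartCode k A v : Set (CartPts A → K)) =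
      {c | ∃ f : MvPolynomial (Fin m) K, f.totalDegree < k ∧
        (∀ i, MvPolynomial.degreeOf i f < (A i).card) ∧
        c = fun a => v a * MvPolynomial.eval (a.1 : Fin m → K) f} := by
  ext c
  simp only [SetLike.mem_coe, cartCode, Submodule.mem_map, mem_degLT_iff hk, evalLM_apply,
    Set.mem_ofPred_eq]
  constructor
  · rintro ⟨f, hf, rfl⟩
    obtain ⟨r, hr_deg, hr_var, hr_eval⟩ := exists_degreeOf_lt_eval_eq A hA f
    exact ⟨r, hr_deg.trans_lt hf, hr_var, funext fun a => by rw [hr_eval a.1 a.2]⟩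
  · rintro ⟨f, hf, -, rfl⟩
    exact ⟨f, hf, rfl⟩

/-- Every codeword of `C_k(𝒜, v)` is the evaluation of a polynomial of total degree `< k` whose
degree in each variable `X_i` is `< n_i`. -/
theorem cartCode_eq_lowDeg_image {K : Type*} [Field K] [Fintype K] [DecidableEq K]
    {m : ℕ} (hm : 1 ≤ m) (A : Fin m → Finset K) (hA : ∀ i, (A i).Nonempty)
    (v : CartPts A → K) (hv : ∀ a, v a ≠ 0) (k : ℕ) (hk : 1 ≤ k) :
    (cartCode k A v : Set (CartPts A → K)) =
      {c | ∃ f : MvPolynomial (Fin m) K, f.totalDegree < k ∧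
        (∀ i, MvPolynomial.degreeOf i f < (A i).card) ∧
        c = fun a => v a * MvPolynomial.eval (a.1 : Fin m → K) f} :=
  cartCode_eq_lowDeg_image_general A hA v k hk
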